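/- arXiv:2112.11870 — 3 statements merged into one kernel-verified Lean document; each statement's English description precedes it below -/
import Mathlib

section
/- Under the BAG construction, the finite-dimensional density p̃(w_L) defined in equation (6) is invariant under permutations of the locations: for any finite set L ⊂ D and any permutation L_π of L, p̃(w_L) = p̃(w_{L_π}). -/
open MeasureTheory
open scoped ENNReal Classical

/-- Assemble a full configuration `D → ℝ`: at locations hit by the tuple `l` use the
corresponding entry of `x`, elsewhere use the background configuration `v`. -/
noncomputable def assemble {D : Type*} {n : ℕ} (l : Fin n → D) (x : Fin n → ℝ)
    (v : D → ℝ) : D → ℝ :=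
  fun d => if h : ∃ i, l i = d then x h.choose else v d

/-- Extend a configuration on the reference set `S` to all of `D` (by zero off `S`). -/
noncomputable def extendS {D : Type*} (S : Finset D) (v : ↥S → ℝ) : D → ℝ :=
  fun d => if h : d ∈ S then v ⟨d, h⟩ else 0

/-- Product measure integrating out the reference coordinates in `S ∖ L`: Lebesgue on
coordinates of `S` not covered by the tuple `l`, and a point mass on covered ones
(on which the integrand does not depend). -/
noncomputable def refMeasure {D : Type*} {n : ℕ} (S : Finset D) (l : Fin n → D) :
    Measure (↥S → ℝ) :=
  Measure.pi (fun s => if ∃ i, l i = (s : D) then Measure.dirac 0 else volume)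

/-- The BAG finite-dimensional density (equation (6)) of the realizations `x` at the tuple of
locations `l`: integrate over the reference realizations in `S ∖ L` the mixture over DAG
configurations `z` of (product over non-reference locations of `L` of their conditional
densities `q`) × (reference density `pS`) × (DAG prior `pz`). -/
noncomputable def ptilde {D : Type*} (S : Finset D) (M K : ℕ) (part : D → Fin M)
    (pz : (Fin M → Fin K) → ℝ≥0∞)
    (q : D → Fin K → (D → ℝ) → ℝ≥0∞)
    (pS : (Fin M → Fin K) → (D → ℝ) → ℝ≥0∞)
    {n : ℕ} (l : Fin n → D) (x : Fin n → ℝ) : ℝ≥0∞ :=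
  ∫⁻ v : ↥S → ℝ,
    ∑ z : Fin M → Fin K,
      (∏ i ∈ Finset.univ.filter (fun i : Fin n => l i ∉ S),
        q (l i) (z (part (l i))) (assemble l x (extendS S v))) *
      pS z (assemble l x (extendS S v)) * pz z
  ∂ refMeasure S l

/-! Permuting the tuple of locations changes neither the set of locations it covers (hence
neither the reference measure nor, by injectivity, the assembled configuration); it only
reindexes the product over the non-reference locations. -/

section Reindex

variable {D : Type*} {m n : ℕ}

theorem assemble_apply_of_injective {l : Fin n → D} (hl : Function.Injective l)
    (x : Fin n → ℝ) (v : D → ℝ) (i : Fin n) : assemble l x v (l i) = x i := by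
  have h : ∃ j, l j = l i := ⟨i, rfl⟩
  rw [assemble, dif_pos h, hl h.choose_spec]

theorem assemble_apply_of_notMem_range {l : Fin n → D} (x : Fin n → ℝ) (v : D → ℝ)
    {d : D} (hd : d ∉ Set.range l) : assemble l x v d = v d :=
  dif_neg hd

theorem assemble_comp_equiv {l : Fin n → D} (hl : Function.Injective l) (σ : Fin m ≃ Fin n)
    (x : Fin n → ℝ) (v : D → ℝ) : assemble (l ∘ σ) (x ∘ σ) v = assemble l x v := by
  have hlσ : Function.Injective (l ∘ σ) := hl.comp σ.injective
  funext d
  by_cases hd : d ∈ Set.range l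
  · obtain ⟨i, rfl⟩ := hd
    have hi : (l ∘ σ) (σ.symm i) = l i := by simp
    rw [← hi, assemble_apply_of_injective hlσ, hi, assemble_apply_of_injective hl]
    simp
  · rw [assemble_apply_of_notMem_range _ _ hd, assemble_apply_of_notMem_range]
    rwa [EquivLike.range_comp]

theorem refMeasure_comp_equiv (S : Finset D) (l : Fin n → D) (σ : Fin m ≃ Fin n) :
    refMeasure S (l ∘ σ) = refMeasure S l := by
  simp only [refMeasure, Function.comp_apply, σ.surjective.exists]

end Reindex

/-- Kolmogorov consistency under permutation: the BAG finite-dimensional density is invariant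
under a permutation of the locations, `p̃(w_L) = p̃(w_{L_π})`. -/
theorem ptilde_perm_invariant {D : Type*} (S : Finset D) (M K : ℕ) (part : D → Fin M)
    (pz : (Fin M → Fin K) → ℝ≥0∞)
    (q : D → Fin K → (D → ℝ) → ℝ≥0∞)
    (pS : (Fin M → Fin K) → (D → ℝ) → ℝ≥0∞)
    {n : ℕ} (l : Fin n → D) (x : Fin n → ℝ) (hl : Function.Injective l)
    (σ : Equiv.Perm (Fin n)) :
    ptilde S M K part pz q pS (l ∘ σ) (x ∘ σ) = ptilde S M K part pz q pS l x := by
  simp only [ptilde, refMeasure_comp_equiv, assemble_comp_equiv hl]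
  refine lintegral_congr fun v => Finset.sum_congr rfl fun z _ => ?_
  congr 2
  exact Finset.prod_equiv σ (by simp) fun _ _ => rfl
end

section
/- Fix a DAG configuration z. If l₁ ∈ U_i and l₂ ∈ U_j are non-reference locations, then under the Gaussian BAG conditional on z, Cov(w(l₁), w(l₂) | z) = 1(l₁ = l₂) R_{l₁|z_i} + H_{l₁|z_i} C̃_{[l₁|z_i],[l₂|z_j]} H_{l₂|z_j}^T. -/
/-!
Covariance is bilinear on `L²`, so expanding `w l = ∑ s, H l s * wS s + ε l` splits
`Cov(w l₁, w l₂)` into four blocks. Independence of `ε l` from `wS` kills the two cross blocks,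
and since the `ε l` are centred, the noise block is the second moment `E[ε l₁ * ε l₂]`.
-/

open MeasureTheory ProbabilityTheory

/-- Covariance of two real random variables under a measure `ν`. -/
noncomputable def cov {Ω : Type*} [MeasurableSpace Ω] (ν : Measure Ω) (X Y : Ω → ℝ) : ℝ :=
  (∫ ω, X ω * Y ω ∂ν) - (∫ ω, X ω ∂ν) * (∫ ω, Y ω ∂ν)

section

variable {Ω : Type*} [MeasurableSpace Ω] {μ : Measure Ω}

theorem cov_eq_covariance [IsProbabilityMeasure μ] {X Y : Ω → ℝ} (hX : MemLp X 2 μ)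
    (hY : MemLp Y 2 μ) : cov μ X Y = cov[X, Y; μ] :=
  (covariance_eq_sub hX hY).symm

theorem cov_eq_integral_mul_of_integral_eq_zero {X Y : Ω → ℝ} (hX : ∫ ω, X ω ∂μ = 0) :
    cov μ X Y = ∫ ω, X ω * Y ω ∂μ := by
  rw [cov, hX, zero_mul, sub_zero]

theorem ProbabilityTheory.IndepFun.covariance_eval_right_eq_zero {ι : Type*} {X : Ω → ℝ}
    {Y : ι → Ω → ℝ} (h : IndepFun X (fun ω i => Y i ω) μ) (hX : MemLp X 2 μ) (i : ι)
    (hY : MemLp (Y i) 2 μ) :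
    cov[X, Y i; μ] = 0 :=
  (h.comp measurable_id (measurable_pi_apply i)).covariance_eq_zero hX hY

theorem memLp_linearCombination_add {ι : Type*} [Fintype ι] {X : ι → Ω → ℝ} {ε : Ω → ℝ}
    (a : ι → ℝ) (hX : ∀ i, MemLp (X i) 2 μ) (hε : MemLp ε 2 μ) :
    MemLp (fun ω => ∑ i, a i * X i ω + ε ω) 2 μ :=
  (memLp_finsetSum _ fun i _ => (hX i).const_mul (a i)).add hε

theorem covariance_linearCombination_add [IsFiniteMeasure μ] {ι : Type*} [Fintype ι]
    {X : ι → Ω → ℝ} {ε₁ ε₂ : Ω → ℝ} (a b : ι → ℝ) (hX : ∀ i, MemLp (X i) 2 μ)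
    (hε₁ : MemLp ε₁ 2 μ) (hε₂ : MemLp ε₂ 2 μ) (h₁ : ∀ i, cov[ε₁, X i; μ] = 0)
    (h₂ : ∀ i, cov[ε₂, X i; μ] = 0) :
    cov[fun ω => ∑ i, a i * X i ω + ε₁ ω, fun ω => ∑ j, b j * X j ω + ε₂ ω; μ] =
      ∑ i, ∑ j, a i * cov[X i, X j; μ] * b j + cov[ε₁, ε₂; μ] := by
  have haX : ∀ i, MemLp (fun ω => a i * X i ω) 2 μ := fun i => (hX i).const_mul (a i)
  have hbX : ∀ j, MemLp (fun ω => b j * X j ω) 2 μ := fun j => (hX j).const_mul (b j)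
  have haX_sum := memLp_finsetSum Finset.univ fun i _ => haX i
  have hbX_sum := memLp_finsetSum Finset.univ fun j _ => hbX j
  change cov[(fun ω => ∑ i, a i * X i ω) + ε₁, (fun ω => ∑ j, b j * X j ω) + ε₂; μ] = _
  rw [covariance_add_left haX_sum hε₁ (hbX_sum.add hε₂),
    covariance_add_right haX_sum hbX_sum hε₂, covariance_add_right hε₁ hbX_sum hε₂,
    covariance_fun_sum_fun_sum haX hbX, covariance_fun_sum_left haX hε₂,
    covariance_fun_sum_right hbX hε₁]
  simp only [covariance_const_mul_left, covariance_const_mul_right, covariance_comm (X _) ε₂, h₁,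
    h₂, mul_zero, Finset.sum_const_zero, add_zero, zero_add]
  congr 1
  exact Finset.sum_congr rfl fun i _ => Finset.sum_congr rfl fun j _ => by ring

end

theorem cov_nonref_nonref_general {Ω : Type*} [MeasurableSpace Ω]
    (μ : Measure Ω) [IsProbabilityMeasure μ]
    {S : Type*} [Fintype S]
    {D : Type*} [DecidableEq D]
    (wS : S → Ω → ℝ) (hL2 : ∀ s, MemLp (wS s) 2 μ)
    (H : D → S → ℝ) (R : D → ℝ)
    (ε : D → Ω → ℝ) (hεL2 : ∀ l, MemLp (ε l) 2 μ)
    (hεmean : ∀ l, (∫ ω, ε l ω ∂μ) = 0)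
    (hεvar : ∀ l, (∫ ω, ε l ω * ε l ω ∂μ) = R l)
    (hindep : ∀ l, IndepFun (ε l) (fun ω s => wS s ω) μ)
    (hεuncorr : ∀ l l', l ≠ l' → (∫ ω, ε l ω * ε l' ω ∂μ) = 0)
    (w : D → Ω → ℝ) (hw : ∀ l ω, w l ω = (∑ s, H l s * wS s ω) + ε l ω)
    (l₁ l₂ : D) :
    cov μ (w l₁) (w l₂) =
      (if l₁ = l₂ then R l₁ else 0) +
        ∑ s, ∑ s', H l₁ s * cov μ (wS s) (wS s') * H l₂ s' := by
  obtain rfl : w = fun l ω => ∑ s, H l s * wS s ω + ε l ω := funext fun l => funext (hw l)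
  have hcross : ∀ l s, cov[ε l, wS s; μ] = 0 := fun l s =>
    (hindep l).covariance_eval_right_eq_zero (hεL2 l) s (hL2 s)
  have hnoise : cov μ (ε l₁) (ε l₂) = if l₁ = l₂ then R l₁ else 0 := by
    rw [cov_eq_integral_mul_of_integral_eq_zero (hεmean l₁)]
    split_ifs with h
    · exact h ▸ hεvar l₁
    · exact hεuncorr l₁ l₂ h
  rw [cov_eq_covariance (memLp_linearCombination_add _ hL2 (hεL2 l₁))
      (memLp_linearCombination_add _ hL2 (hεL2 l₂)),
    covariance_linearCombination_add _ _ hL2 (hεL2 l₁) (hεL2 l₂) (hcross l₁) (hcross l₂),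
    ← cov_eq_covariance (hεL2 l₁) (hεL2 l₂), hnoise, add_comm]
  simp_rw [cov_eq_covariance (hL2 _) (hL2 _)]

/-- Gaussian BAG, conditional on a DAG configuration `z`: for non-reference locations
`l₁ ∈ U_i`, `l₂ ∈ U_j` with `w(l) = H_{l|z} w_{[l|z]} + ε_l`, where the `ε_l` are mean zero
with variance `R_l`, independent of the mean-zero reference realizations `w_S`, and mutually
uncorrelated across distinct non-reference locations,
`Cov(w(l₁), w(l₂) | z) = 1(l₁ = l₂) R_{l₁|z_i} + H_{l₁|z_i} C̃_{[l₁|z_i],[l₂|z_j]} H_{l₂|z_j}ᵀ`. -/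
theorem cov_nonref_nonref {Ω : Type*} [MeasurableSpace Ω]
    (μ : Measure Ω) [IsProbabilityMeasure μ]
    {S : Type*} [Fintype S]
    {D : Type*} [DecidableEq D]
    (wS : S → Ω → ℝ) (hL2 : ∀ s, MemLp (wS s) 2 μ)
    (hmean : ∀ s, (∫ ω, wS s ω ∂μ) = 0)
    (H : D → S → ℝ) (R : D → ℝ) (hR : ∀ l, 0 ≤ R l)
    (ε : D → Ω → ℝ) (hεL2 : ∀ l, MemLp (ε l) 2 μ)
    (hεmean : ∀ l, (∫ ω, ε l ω ∂μ) = 0)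
    (hεvar : ∀ l, (∫ ω, ε l ω * ε l ω ∂μ) = R l)
    (hindep : ∀ l, IndepFun (ε l) (fun ω s => wS s ω) μ)
    (hεuncorr : ∀ l l', l ≠ l' → (∫ ω, ε l ω * ε l' ω ∂μ) = 0)
    (w : D → Ω → ℝ) (hw : ∀ l ω, w l ω = (∑ s, H l s * wS s ω) + ε l ω)
    (l₁ l₂ : D) :
    cov μ (w l₁) (w l₂) =
      (if l₁ = l₂ then R l₁ else 0) +
        ∑ s, ∑ s', H l₁ s * cov μ (wS s) (wS s') * H l₂ s' :=
  cov_nonref_nonref_general μ wS hL2 H R ε hεL2 hεmean hεvar hindep hεuncorr w hw l₁ l₂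
end

section
/- Let H_z be a k × k block matrix where block row i has at most one nonzero off-diagonal block (at column j with a_j = [a_i|z_i]). Then for i ≠ j, the (i,j) block of (I − H_z)^T R_z^{-1} (I − H_z) is nonzero only if there is a directed edge between a_i and a_j in the DAG (i.e., a_i = [a_j|z_j] or a_j = [a_i|z_i]); equivalently, the off-diagonal sparsity pattern of the precision matrix coincides with the adjacency structure of the DAG. -/
open Matrix

/-!
Write `A = 1 - H` and `D = R_z⁻¹`. An entry of `Aᵀ D A` in block `(i, j)` is a sum of products
`A (l,s) (i,p) * D (l,s) (l,s') * A (l,s') (j,q)` over a single block row `l`, since `D` is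
block diagonal. Such a product needs the blocks `(l, i)` and `(l, j)` of `1 - H` to be both nonzero,
i.e. `i` and `j` each equal `l` or its unique parent. With `i ≠ j` this forces `l ∈ {i, j}` and an
edge between `i` and `j`: with one parent per node, moralization adds no edges.
-/

namespace Matrix

variable {n ι R : Type*}

theorem transpose_mul_mul_apply_eq_zero [Fintype n] [CommSemiring R] (b : n → ι)
    {A D : Matrix n n R} (hD : ∀ s t, b s ≠ b t → D s t = 0) {x y : n}
    (hA : ∀ s t, A s x ≠ 0 → A t y ≠ 0 → b s ≠ b t) :
    (Aᵀ * D * A) x y = 0 := by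
  rw [mul_apply]
  refine Finset.sum_eq_zero fun t _ => ?_
  by_cases hty : A t y = 0
  · rw [hty, mul_zero]
  rw [mul_apply, Finset.sum_eq_zero, zero_mul]
  intro s _
  by_cases hsx : A s x = 0
  · rw [transpose_apply, hsx, zero_mul]
  · rw [hD s t (hA s t hsx hty), mul_zero]

theorem eq_or_ne_zero_of_one_sub_apply_ne_zero [DecidableEq n] [Ring R] {H : Matrix n n R}
    {s t : n} (h : (1 - H) s t ≠ 0) : s = t ∨ H s t ≠ 0 := by
  refine or_iff_not_imp_left.2 fun hst hH => h ?_
  rw [sub_apply, one_apply_ne hst, hH, sub_zero]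

end Matrix

theorem bag_precision_sparsity_general (M : ℕ) (k : Fin M → ℕ)
    (par : Fin M → Option (Fin M))
    (Hblk : (i j : Fin M) → Matrix (Fin (k i)) (Fin (k j)) ℝ)
    (hH : ∀ i j, par i ≠ some j → Hblk i j = 0)
    (H Rm : Matrix ((i : Fin M) × Fin (k i)) ((i : Fin M) × Fin (k i)) ℝ)
    (hHdef : ∀ (i j : Fin M) (p : Fin (k i)) (q : Fin (k j)), H ⟨i, p⟩ ⟨j, q⟩ = Hblk i j p q)
    (hRoff : ∀ (i j : Fin M) (p : Fin (k i)) (q : Fin (k j)), i ≠ j → Rm ⟨i, p⟩ ⟨j, q⟩ = 0)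
    (P : Matrix ((i : Fin M) × Fin (k i)) ((i : Fin M) × Fin (k i)) ℝ)
    (hP : P = (1 - H)ᵀ * Rm * (1 - H)) :
    ∀ i j : Fin M, i ≠ j →
      (Matrix.of fun (p : Fin (k i)) (q : Fin (k j)) => P ⟨i, p⟩ ⟨j, q⟩) ≠ 0 →
      par i = some j ∨ par j = some i := by
  have hsupp : ∀ (l m : Fin M) (s : Fin (k l)) (t : Fin (k m)),
      (1 - H) ⟨l, s⟩ ⟨m, t⟩ ≠ 0 → l = m ∨ par l = some m := by
    intro l m s t h
    refine (eq_or_ne_zero_of_one_sub_apply_ne_zero h).imp (congrArg Sigma.fst) fun hne => ?_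
    by_contra hpar
    exact hne (by rw [hHdef, hH l m hpar]; rfl)
  intro i j hij hblk
  by_contra hnoedge
  rw [not_or] at hnoedge
  refine hblk (ext fun p q => ?_)
  rw [of_apply, hP]
  refine transpose_mul_mul_apply_eq_zero Sigma.fst (fun ⟨l, s⟩ ⟨m, t⟩ => hRoff l m s t) ?_
  rintro ⟨l, s⟩ ⟨m, t⟩ hli hmj (rfl : l = m)
  rcases hsupp _ _ _ _ hli with rfl | hli <;> rcases hsupp _ _ _ _ hmj with rfl | hmj
  exacts [hij rfl, hnoedge.1 hmj, hnoedge.2 hli, hij (Option.some.inj (hli.symm.trans hmj))]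

/-- Moralization for single-parent DAGs: if each block row of `H_z` has at most one nonzero
off-diagonal block (at the column of its unique parent), then for `i ≠ j` the `(i,j)` block
of the precision matrix `(I − H_z)ᵀ R_z⁻¹ (I − H_z)` can be nonzero only if there is a
directed edge between `a_i` and `a_j` in the DAG (`a_i = [a_j|z_j]` or `a_j = [a_i|z_i]`):
the off-diagonal sparsity of the precision matrix coincides with the DAG adjacency. -/
theorem bag_precision_sparsity (M : ℕ) (k : Fin M → ℕ)
    (par : Fin M → Option (Fin M))
    (hpar : ∀ i j, par i = some j → j < i)
    (Hblk : (i j : Fin M) → Matrix (Fin (k i)) (Fin (k j)) ℝ)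
    (hH : ∀ i j, par i ≠ some j → Hblk i j = 0)
    (Rinv : (i : Fin M) → Matrix (Fin (k i)) (Fin (k i)) ℝ)
    (H Rm : Matrix ((i : Fin M) × Fin (k i)) ((i : Fin M) × Fin (k i)) ℝ)
    (hHdef : ∀ (i j : Fin M) (p : Fin (k i)) (q : Fin (k j)), H ⟨i, p⟩ ⟨j, q⟩ = Hblk i j p q)
    (hRdiag : ∀ (i : Fin M) (p q : Fin (k i)), Rm ⟨i, p⟩ ⟨i, q⟩ = Rinv i p q)
    (hRoff : ∀ (i j : Fin M) (p : Fin (k i)) (q : Fin (k j)), i ≠ j → Rm ⟨i, p⟩ ⟨j, q⟩ = 0)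
    (P : Matrix ((i : Fin M) × Fin (k i)) ((i : Fin M) × Fin (k i)) ℝ)
    (hP : P = (1 - H)ᵀ * Rm * (1 - H)) :
    ∀ i j : Fin M, i ≠ j →
      (Matrix.of fun (p : Fin (k i)) (q : Fin (k j)) => P ⟨i, p⟩ ⟨j, q⟩) ≠ 0 →
      par i = some j ∨ par j = some i :=
  bag_precision_sparsity_general M k par Hblk hH H Rm hHdef hRoff P hP
end
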